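/- arXiv:2601.05679 — 4 statements merged into one kernel-verified Lean document; each statement's English description precedes it below -/
import Mathlib

section
/- Let X ~ N(0, σ²) with σ > 0, let t > 0, and set u := t/σ. Then E[ST(X, t)²] = 2σ²·((1 + u²)(1 - Φ(u)) - u·φ(u)). -/
open ProbabilityTheory

/-- Soft-thresholding operator. -/
noncomputable def softThresh (x t : ℝ) : ℝ := Real.sign x * max (|x| - t) 0

/-- Standard normal density. -/
noncomputable def stdNormalPDF (z : ℝ) : ℝ :=
  (Real.sqrt (2 * Real.pi))⁻¹ * Real.exp (-z ^ 2 / 2)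

/-- Standard normal CDF. -/
noncomputable def stdNormalCDF (u : ℝ) : ℝ := ∫ z in Set.Iic u, stdNormalPDF z

open MeasureTheory Real Filter Set Topology
open scoped ENNReal NNReal

lemma stdNormalPDF_eq (z : ℝ) :
    stdNormalPDF z = (Real.sqrt (2 * Real.pi))⁻¹ * Real.exp (-(1/2) * z ^ 2) := by
  rw [stdNormalPDF]; ring_nf

lemma stdNormalPDF_nonneg (z : ℝ) : 0 ≤ stdNormalPDF z := by
  rw [stdNormalPDF]; positivity

lemma stdNormalPDF_neg (z : ℝ) : stdNormalPDF (-z) = stdNormalPDF z := by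
  have h : (-z) ^ 2 = z ^ 2 := by ring
  rw [stdNormalPDF, stdNormalPDF, h]

lemma measurable_stdNormalPDF : Measurable stdNormalPDF := by
  unfold stdNormalPDF; fun_prop

lemma integrable_pow_mul_stdNormalPDF (n : ℕ) :
    Integrable (fun z : ℝ => z ^ n * stdNormalPDF z) := by
  have hs : (-1 : ℝ) < (n : ℝ) := lt_of_lt_of_le neg_one_lt_zero (Nat.cast_nonneg n)
  have h := (integrable_rpow_mul_exp_neg_mul_sq (by norm_num : (0:ℝ) < 1/2) hs).const_mul
    ((Real.sqrt (2 * Real.pi))⁻¹)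
  have heq : (fun z : ℝ => z ^ n * stdNormalPDF z)
      = fun z : ℝ => (Real.sqrt (2 * Real.pi))⁻¹ * (z ^ ((n : ℝ)) * Real.exp (-(1/2) * z ^ 2)) := by
    funext z
    rw [stdNormalPDF_eq, Real.rpow_natCast]
    ring
  rw [heq]
  exact h

lemma integrable_stdNormalPDF : Integrable stdNormalPDF := by
  simpa using integrable_pow_mul_stdNormalPDF 0

lemma integral_stdNormalPDF : ∫ z, stdNormalPDF z = 1 := by
  have h2 : stdNormalPDF = fun z => (Real.sqrt (2 * Real.pi))⁻¹ * Real.exp (-(1/2) * z ^ 2) :=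
    funext stdNormalPDF_eq
  rw [h2, integral_const_mul, integral_gaussian]
  rw [show Real.pi / (1/2) = 2 * Real.pi by ring]
  rw [inv_mul_cancel₀]
  positivity

lemma hasDerivAt_stdNormalPDF (z : ℝ) :
    HasDerivAt stdNormalPDF (-z * stdNormalPDF z) z := by
  have h : HasDerivAt (fun z : ℝ => -(1/2) * z ^ 2) (-z) z := by
    have := (hasDerivAt_pow 2 z).const_mul (-(1/2) : ℝ)
    refine this.congr_deriv ?_
    push_cast
    ring
  have h2 := (h.exp).const_mul ((Real.sqrt (2 * Real.pi))⁻¹)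
  have h3 : stdNormalPDF = fun z => (Real.sqrt (2 * Real.pi))⁻¹ * Real.exp (-(1/2) * z ^ 2) :=
    funext stdNormalPDF_eq
  rw [h3]
  refine h2.congr_deriv ?_
  simp only []
  ring

lemma tendsto_aux (a : ℝ) :
    Tendsto (fun z : ℝ => (a - z) * stdNormalPDF z) atTop (𝓝 0) := by
  have hb : (0:ℝ) < 1/2 := by norm_num
  have hexp : Tendsto (fun x : ℝ => Real.exp (-(1/2) * x)) atTop (𝓝 0) := by
    have hlin : Tendsto (fun x : ℝ => -(1/2) * x) atTop atBot :=
      (tendsto_const_mul_atBot_of_neg (by norm_num : (-(1/2):ℝ) < 0)).2 tendsto_id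
    exact Real.tendsto_exp_atBot.comp hlin
  have h1 : Tendsto (fun z : ℝ => z ^ (1:ℝ) * Real.exp (-(1/2) * z ^ 2)) atTop (𝓝 0) :=
    (rpow_mul_exp_neg_mul_sq_isLittleO_exp_neg hb 1).tendsto_zero_of_tendsto hexp
  have h0 : Tendsto (fun z : ℝ => z ^ (0:ℝ) * Real.exp (-(1/2) * z ^ 2)) atTop (𝓝 0) :=
    (rpow_mul_exp_neg_mul_sq_isLittleO_exp_neg hb 0).tendsto_zero_of_tendsto hexp
  have key : (fun z : ℝ => (a - z) * stdNormalPDF z)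
      = fun z => (Real.sqrt (2 * Real.pi))⁻¹ * a * (z ^ (0:ℝ) * Real.exp (-(1/2) * z ^ 2))
        - (Real.sqrt (2 * Real.pi))⁻¹ * (z ^ (1:ℝ) * Real.exp (-(1/2) * z ^ 2)) := by
    funext z
    rw [stdNormalPDF_eq, Real.rpow_one, Real.rpow_zero]
    ring
  rw [key]
  simpa using (h0.const_mul ((Real.sqrt (2 * Real.pi))⁻¹ * a)).sub
    (h1.const_mul ((Real.sqrt (2 * Real.pi))⁻¹))

lemma integral_Ioi_stdNormalPDF (u : ℝ) :
    ∫ z in Ioi u, stdNormalPDF z = 1 - stdNormalCDF u := by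
  have h := intervalIntegral.integral_Iic_add_Ioi (b := u) (f := stdNormalPDF) (μ := volume)
    integrable_stdNormalPDF.integrableOn integrable_stdNormalPDF.integrableOn
  rw [integral_stdNormalPDF] at h
  rw [stdNormalCDF]
  linarith

lemma integral_Ioi_sq_stdNormalPDF (u : ℝ) :
    ∫ z in Ioi u, (z - u) ^ 2 * stdNormalPDF z
      = (1 + u ^ 2) * (1 - stdNormalCDF u) - u * stdNormalPDF u := by
  have hderiv : ∀ z ∈ Ici u, HasDerivAt (fun z => (2*u - z) * stdNormalPDF z)
      ((z ^ 2 - 2*u*z - 1) * stdNormalPDF z) z := by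
    intro z _
    have h1 : HasDerivAt (fun z : ℝ => 2*u - z) (-1) z := by
      simpa using (hasDerivAt_id z).const_sub (2*u)
    have h := h1.mul (hasDerivAt_stdNormalPDF z)
    refine h.congr_deriv ?_
    ring
  have hint_poly : Integrable (fun z : ℝ => (z ^ 2 - 2*u*z - 1) * stdNormalPDF z) := by
    have h2 := integrable_pow_mul_stdNormalPDF 2
    have h1 := (integrable_pow_mul_stdNormalPDF 1).const_mul (2*u)
    have h0 := integrable_stdNormalPDF
    refine ((h2.sub h1).sub h0).congr (Filter.Eventually.of_forall fun z => ?_)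
    simp only [Pi.sub_apply, pow_one]
    ring
  have hFTC := integral_Ioi_of_hasDerivAt_of_tendsto' hderiv hint_poly.integrableOn
    (tendsto_aux (2*u))
  have hsplit : ∫ z in Ioi u, (z - u) ^ 2 * stdNormalPDF z
      = (∫ z in Ioi u, (z ^ 2 - 2*u*z - 1) * stdNormalPDF z)
        + ∫ z in Ioi u, (1 + u ^ 2) * stdNormalPDF z := by
    rw [← integral_add hint_poly.integrableOn
      ((integrable_stdNormalPDF.const_mul (1 + u ^ 2)).integrableOn)]
    refine integral_congr_ae (Filter.Eventually.of_forall fun z => ?_)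
    ring
  rw [hsplit, hFTC, integral_const_mul, integral_Ioi_stdNormalPDF]
  ring

lemma integral_even_part (u : ℝ) (hu : 0 < u) :
    ∫ z : ℝ, max (|z| - u) 0 ^ 2 * stdNormalPDF z
      = 2 * ∫ z in Ioi u, (z - u) ^ 2 * stdNormalPDF z := by
  set g : ℝ → ℝ := fun z => max (|z| - u) 0 ^ 2 * stdNormalPDF z with hg
  have hg_meas : Measurable g :=
    (((measurable_abs.sub measurable_const).max measurable_const).pow_const 2).mul
      measurable_stdNormalPDF
  have hg_int : Integrable g := by
    refine (integrable_pow_mul_stdNormalPDF 2).mono' hg_meas.aestronglyMeasurable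
      (Filter.Eventually.of_forall fun z => ?_)
    rw [Real.norm_eq_abs, abs_of_nonneg (mul_nonneg (by positivity) (stdNormalPDF_nonneg z))]
    refine mul_le_mul_of_nonneg_right ?_ (stdNormalPDF_nonneg z)
    have h1 : max (|z| - u) 0 ≤ |z| := max_le (by linarith [abs_nonneg z]) (abs_nonneg z)
    calc max (|z| - u) 0 ^ 2 ≤ |z| ^ 2 := by
          exact pow_le_pow_left₀ (le_max_right _ _) h1 2
      _ = z ^ 2 := sq_abs z
  have heven : (fun z : ℝ => g (-z)) = g := by
    funext z
    simp [hg, abs_neg, stdNormalPDF_neg]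
  have hIic : ∫ z in Iic (-u), g z = ∫ z in Ioi u, g z := by
    have h := integral_comp_neg_Iic (-u) g
    rw [heven] at h
    rw [h, neg_neg]
  have hmid : ∫ z in Ioc (-u) u, g z = 0 := by
    refine setIntegral_eq_zero_of_forall_eq_zero fun z hz => ?_
    have hz' : |z| ≤ u := abs_le.mpr ⟨hz.1.le, hz.2⟩
    have : max (|z| - u) 0 = 0 := max_eq_right (by linarith)
    simp [hg, this]
  have hsplit : ∫ z in Ioi (-u), g z = (∫ z in Ioc (-u) u, g z) + ∫ z in Ioi u, g z := by
    rw [← Ioc_union_Ioi_eq_Ioi (by linarith : -u ≤ u)]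
    exact setIntegral_union (Set.Ioc_disjoint_Ioi le_rfl) measurableSet_Ioi
      hg_int.integrableOn hg_int.integrableOn
  have htotal : ∫ z, g z = (∫ z in Iic (-u), g z) + ∫ z in Ioi (-u), g z :=
    (intervalIntegral.integral_Iic_add_Ioi hg_int.integrableOn hg_int.integrableOn).symm
  have hcongr : ∫ z in Ioi u, g z = ∫ z in Ioi u, (z - u) ^ 2 * stdNormalPDF z := by
    refine setIntegral_congr_fun measurableSet_Ioi fun z hz => ?_
    have hz' : u < z := hz
    rw [hg]
    simp only []
    rw [abs_of_pos (lt_trans hu hz'), max_eq_left (by linarith)]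
  rw [htotal, hsplit, hmid, hIic, hcongr]
  ring

/-- For `X ~ N(0, σ²)`, `σ > 0`, `t > 0` and `u := t/σ`,
`E[ST(X,t)²] = 2σ²((1 + u²)(1 - Φ(u)) - u φ(u))`. -/
theorem expectation_softThresh_sq (σ t : ℝ) (hσ : 0 < σ) (ht : 0 < t) :
    ∫ x, softThresh x t ^ 2 ∂(gaussianReal 0 ⟨σ ^ 2, sq_nonneg σ⟩)
      = 2 * σ ^ 2 * ((1 + (t / σ) ^ 2) * (1 - stdNormalCDF (t / σ))
          - (t / σ) * stdNormalPDF (t / σ)) := by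
  have hσ0 : σ ≠ 0 := ne_of_gt hσ
  have hu : 0 < t / σ := div_pos ht hσ
  have hST : (fun x => softThresh x t ^ 2) = fun x => max (|x| - t) 0 ^ 2 := by
    funext x
    rcases lt_trichotomy x 0 with h|h|h
    · rw [softThresh, Real.sign_of_neg h, mul_pow]; ring
    · rw [h, softThresh, Real.sign_zero, abs_zero, zero_sub,
        max_eq_right (neg_nonpos.mpr ht.le)]
      ring
    · rw [softThresh, Real.sign_of_pos h, mul_pow]; ring
  rw [hST]
  have hmap : Measure.map (fun x => σ * x) (gaussianReal 0 1)
      = gaussianReal 0 ⟨σ ^ 2, sq_nonneg σ⟩ := by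
    rw [show (fun x : ℝ => σ * x) = (σ * ·) from rfl, gaussianReal_map_const_mul]
    congr 1
    · ring
    · exact mul_one _
  have hmeas : Measurable fun x : ℝ => max (|x| - t) 0 ^ 2 :=
    ((measurable_abs.sub measurable_const).max measurable_const).pow_const 2
  rw [← hmap, integral_map (measurable_const_mul σ).aemeasurable hmeas.aestronglyMeasurable]
  rw [gaussianReal_of_var_ne_zero _ one_ne_zero]
  rw [show gaussianPDF 0 1 = fun x => ((Real.toNNReal (gaussianPDFReal 0 1 x) : ℝ≥0) : ℝ≥0∞)
    from rfl]
  rw [integral_withDensity_eq_integral_smul (measurable_gaussianPDFReal 0 1).real_toNNReal]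
  have hpdf : ∀ x : ℝ, gaussianPDFReal 0 1 x = stdNormalPDF x := by
    intro x
    rw [gaussianPDFReal, stdNormalPDF]
    norm_num
  have hinteg : (fun x : ℝ => Real.toNNReal (gaussianPDFReal 0 1 x) • max (|σ * x| - t) 0 ^ 2)
      = fun x : ℝ => σ ^ 2 * (max (|x| - t / σ) 0 ^ 2 * stdNormalPDF x) := by
    funext x
    rw [NNReal.smul_def, Real.coe_toNNReal _ (gaussianPDFReal_nonneg 0 1 x), hpdf]
    have h1 : |σ * x| - t = σ * (|x| - t / σ) := by
      rw [abs_mul, abs_of_pos hσ]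
      field_simp
    have h2 : max (σ * (|x| - t / σ)) 0 = σ * max (|x| - t / σ) 0 := by
      rw [← mul_zero σ, ← mul_max_of_nonneg _ _ hσ.le, mul_zero]
    rw [h1, h2, smul_eq_mul]
    ring
  rw [hinteg, integral_const_mul, integral_even_part (t / σ) hu,
    integral_Ioi_sq_stdNormalPDF (t / σ)]
  ring
end

section
/- Let X ~ N(0, σ²) with σ > 0 and t > 0, set u := t/σ. Then E[ST(X, t)²] ≤ 2σ²·φ(u)/u. -/
open ProbabilityTheory MeasureTheory Real Set Filter
open scoped NNReal ENNReal Topology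

/-- For `X ~ N(0, σ²)`, `σ > 0`, `t > 0` and `u := t/σ`, `E[ST(X,t)²] ≤ 2σ² φ(u)/u`. -/
theorem expectation_softThresh_sq_le (σ t : ℝ) (hσ : 0 < σ) (ht : 0 < t) :
    ∫ x, softThresh x t ^ 2 ∂(gaussianReal 0 ⟨σ ^ 2, sq_nonneg σ⟩)
      ≤ 2 * σ ^ 2 * stdNormalPDF (t / σ) / (t / σ) := by
  set v : ℝ≥0 := ⟨σ ^ 2, sq_nonneg σ⟩ with hv
  have hvr : (v : ℝ) = σ ^ 2 := rfl
  have hv0 : v ≠ 0 := by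
    intro h
    rw [← NNReal.coe_eq_zero, hvr] at h
    exact absurd h (by positivity)
  set p : ℝ → ℝ := gaussianPDFReal 0 v with hp
  have hpnn : ∀ x, 0 ≤ p x := gaussianPDFReal_nonneg 0 v
  have hpdef : ∀ x, p x = (Real.sqrt (2 * π * σ ^ 2))⁻¹ * Real.exp (-(x - 0) ^ 2 / (2 * σ ^ 2)) :=
    fun x => rfl
  -- step 1 : integral against density
  have hμ : ∀ g : ℝ → ℝ, ∫ x, g x ∂(gaussianReal 0 v) = ∫ x, p x * g x := by
    intro g
    rw [gaussianReal_of_var_ne_zero _ hv0]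
    have h1 : (gaussianPDF 0 v) = fun x => (((p x).toNNReal : ℝ≥0) : ℝ≥0∞) := rfl
    rw [h1, integral_withDensity_eq_integral_smul
      ((measurable_gaussianPDFReal 0 v).real_toNNReal) g]
    congr 1; ext x
    simp [NNReal.smul_def, Real.coe_toNNReal _ (hpnn x)]; exact Or.inl (max_eq_left (hpnn x))
  -- derivative of the density
  have hpderiv : ∀ x, HasDerivAt p (-(x / σ ^ 2) * p x) x := by
    intro x
    have h1 : HasDerivAt (fun y : ℝ => -(y - 0) ^ 2 / (2 * σ ^ 2))
        (-(2 * (x - 0) ^ 1 * 1) / (2 * σ ^ 2)) x :=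
      (((hasDerivAt_id x).sub_const 0).pow 2).neg.div_const _
    have h2 := (h1.exp).const_mul ((Real.sqrt (2 * π * σ ^ 2))⁻¹)
    refine h2.congr_deriv ?_
    rw [hpdef x]; field_simp; ring
  set f : ℝ → ℝ := fun x => p x * max (x - t) 0 ^ 2 with hf
  set F : ℝ → ℝ := fun x => σ ^ 2 * p x * ((x - t) ^ 2 + σ ^ 2) / x with hF
  set D : ℝ → ℝ := fun x => p x * ((x - t) ^ 2 + σ ^ 2 * (t ^ 2 + σ ^ 2) / x ^ 2) with hD
  have hFderiv : ∀ x ∈ Ici t, HasDerivAt F (-(D x)) x := by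
    intro x hx
    have hx0 : x ≠ 0 := by have : t ≤ x := hx; nlinarith
    have hN : HasDerivAt (fun y : ℝ => σ ^ 2 * p y * ((y - t) ^ 2 + σ ^ 2))
        ((σ ^ 2 * (-(x / σ ^ 2) * p x)) * ((x - t) ^ 2 + σ ^ 2)
          + (σ ^ 2 * p x) * (2 * (x - t) ^ 1 * 1)) x :=
      (((hpderiv x).const_mul (σ ^ 2)).mul
        ((((hasDerivAt_id x).sub_const t).pow 2).add_const (σ ^ 2)))
    have h2 := hN.div (hasDerivAt_id x) hx0
    refine h2.congr_deriv ?_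
    rw [hD]
    simp only [id]
    field_simp
    ring
  have hDnn : ∀ x ∈ Ioi t, 0 ≤ D x := by
    intro x hx
    have hx0 : (0:ℝ) < x := lt_trans ht hx
    have := hpnn x
    rw [hD]
    positivity
  have hnonpos : ∀ x ∈ Ioi t, -(D x) ≤ 0 := fun x hx => neg_nonpos.mpr (hDnn x hx)
  -- tendsto F atTop 0
  set c : ℝ := (Real.sqrt (2 * π * σ ^ 2))⁻¹ with hc
  have hcnn : 0 ≤ c := by positivity
  set b : ℝ := 1 / (2 * σ ^ 2) with hb
  have hbpos : 0 < b := by positivity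
  have hpE : ∀ x, p x = c * Real.exp (-b * x ^ 2) := by
    intro x
    rw [hpdef x, hc, hb]
    congr 2
    ring
  have hexp0 : Tendsto (fun x : ℝ => Real.exp (-(1/2) * x)) atTop (𝓝 0) := by
    have h1 : Tendsto (fun x : ℝ => -(1/2) * x) atTop atBot :=
      Tendsto.const_mul_atTop_of_neg (by norm_num) tendsto_id
    exact Real.tendsto_exp_atBot.comp h1
  have hx1 : Tendsto (fun x : ℝ => x * Real.exp (-b * x ^ 2)) atTop (𝓝 0) := by
    have := (rpow_mul_exp_neg_mul_sq_isLittleO_exp_neg hbpos 1).tendsto_zero_of_tendsto hexp0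
    simpa [Real.rpow_one] using this
  have hx0t : Tendsto (fun x : ℝ => Real.exp (-b * x ^ 2)) atTop (𝓝 0) := by
    have := (rpow_mul_exp_neg_mul_sq_isLittleO_exp_neg hbpos 0).tendsto_zero_of_tendsto hexp0
    simpa [Real.rpow_zero] using this
  have htendg : Tendsto (fun x : ℝ => σ ^ 2 * c * (x * Real.exp (-b * x ^ 2))
      + σ ^ 2 * c * σ ^ 2 * Real.exp (-b * x ^ 2)) atTop (𝓝 0) := by
    have := (hx1.const_mul (σ ^ 2 * c)).add (hx0t.const_mul (σ ^ 2 * c * σ ^ 2))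
    simpa using this
  have htend : Tendsto F atTop (𝓝 0) := by
    apply tendsto_of_tendsto_of_tendsto_of_le_of_le' tendsto_const_nhds htendg
    · filter_upwards [eventually_ge_atTop (max t 1)] with x hx
      have hx1' : (1:ℝ) ≤ x := le_trans (le_max_right _ _) hx
      have hxt : t ≤ x := le_trans (le_max_left _ _) hx
      have hx0 : (0:ℝ) < x := lt_of_lt_of_le one_pos hx1'
      have := hpnn x
      rw [hF]
      positivity
    · filter_upwards [eventually_ge_atTop (max t 1)] with x hx
      have hx1' : (1:ℝ) ≤ x := le_trans (le_max_right _ _) hx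
      have hxt : t ≤ x := le_trans (le_max_left _ _) hx
      have hx0 : (0:ℝ) < x := lt_of_lt_of_le one_pos hx1'
      have hFx : F x = σ ^ 2 * c * Real.exp (-b * x ^ 2) * (((x - t) ^ 2 + σ ^ 2) / x) := by
        simp only [hF]; rw [hpE x]; ring
      have hfrac : ((x - t) ^ 2 + σ ^ 2) / x ≤ x + σ ^ 2 := by
        rw [div_le_iff₀ hx0]
        nlinarith [sq_nonneg (x - t), sq_nonneg σ]
      have hEpos : (0:ℝ) < Real.exp (-b * x ^ 2) := Real.exp_pos _
      calc F x ≤ σ ^ 2 * c * Real.exp (-b * x ^ 2) * (x + σ ^ 2) := by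
            rw [hFx]
            apply mul_le_mul_of_nonneg_left hfrac
            positivity
        _ = σ ^ 2 * c * (x * Real.exp (-b * x ^ 2))
              + σ ^ 2 * c * σ ^ 2 * Real.exp (-b * x ^ 2) := by ring
  -- FTC
  have hIoi : ∫ x in Ioi t, -(D x) = 0 - F t :=
    integral_Ioi_of_hasDerivAt_of_nonpos' hFderiv hnonpos htend
  have hDint : IntegrableOn D (Ioi t) := by
    have h0 : IntegrableOn (fun x => -D x) (Ioi t) :=
      integrableOn_Ioi_deriv_of_nonpos' hFderiv hnonpos htend
    exact h0.neg.congr (ae_of_all _ fun x => by simp)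
  have hDeq : ∫ x in Ioi t, D x = F t := by
    rw [integral_neg] at hIoi; linarith
  -- f ≤ D on Ioi t
  have hfD : ∀ x ∈ Ioi t, f x ≤ D x := by
    intro x hx
    have hx' : t < x := hx
    have hx0 : (0:ℝ) < x := lt_trans ht hx'
    have hmax : max (x - t) 0 = x - t := max_eq_left (by linarith)
    simp only [hf, hD]
    rw [hmax]
    have h1 : 0 ≤ σ ^ 2 * (t ^ 2 + σ ^ 2) / x ^ 2 := by positivity
    nlinarith [hpnn x]
  have hfnn : ∀ x, 0 ≤ f x := by
    intro x
    have := hpnn x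
    simp only [hf]
    positivity
  have hfmeas : Measurable f := by
    apply (measurable_gaussianPDFReal 0 v).mul
    exact (((measurable_id.sub_const t).max measurable_const).pow measurable_const)
  have hfint_on : IntegrableOn f (Ioi t) := by
    apply Integrable.mono hDint hfmeas.aestronglyMeasurable.restrict
    rw [ae_restrict_iff' measurableSet_Ioi]
    apply ae_of_all
    intro x hx
    rw [Real.norm_eq_abs, Real.norm_eq_abs, abs_of_nonneg (hfnn x), abs_of_nonneg (hDnn x hx)]
    exact hfD x hx
  have hsetineq : ∫ x in Ioi t, f x ≤ F t := by
    rw [← hDeq]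
    exact setIntegral_mono_on hfint_on hDint measurableSet_Ioi hfD
  -- support
  have hzero : ∀ x, x ∉ Ioi t → f x = 0 := by
    intro x hx
    simp only [hf]
    have hxt : x ≤ t := not_lt.mp hx
    have h0 : max (x - t) 0 = 0 := max_eq_right (by linarith)
    rw [h0]
    ring
  have hsupp : Function.support f ⊆ Ioi t := Function.support_subset_iff'.mpr hzero
  have hfint : Integrable f := (integrableOn_iff_integrable_of_support_subset hsupp).mp hfint_on
  have hwhole : ∫ x, f x = ∫ x in Ioi t, f x :=
    (setIntegral_eq_integral_of_forall_compl_eq_zero hzero).symm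
  -- symmetry split
  have hpeven : ∀ x, p (-x) = p x := by
    intro x
    rw [hpdef, hpdef]
    congr 2
    ring
  have hsplit : ∀ x, p x * softThresh x t ^ 2 = f x + f (-x) := by
    intro x
    simp only [hf]
    simp only [hpeven x]
    rcases lt_trichotomy x 0 with hx | hx | hx
    · have hs : Real.sign x = -1 := Real.sign_of_neg hx
      have h1 : max (x - t) 0 = 0 := max_eq_right (by linarith)
      have h2 : |x| = -x := abs_of_neg hx
      rw [softThresh, hs, h1, h2]
      ring
    · subst hx
      have h1 : max ((0:ℝ) - t) 0 = 0 := max_eq_right (by linarith)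
      have h2 : max (-(0:ℝ) - t) 0 = 0 := max_eq_right (by linarith)
      rw [softThresh, h1]
      simp only [h2, h1]
      simp
    · have hs : Real.sign x = 1 := Real.sign_of_pos hx
      have h1 : max (-x - t) 0 = 0 := max_eq_right (by linarith)
      have h2 : |x| = x := abs_of_pos hx
      rw [softThresh, hs, h1, h2]
      ring
  have hmain : ∫ x, softThresh x t ^ 2 ∂(gaussianReal 0 v) = 2 * ∫ x in Ioi t, f x := by
    rw [hμ]
    calc ∫ x, p x * softThresh x t ^ 2 = ∫ x, (f x + f (-x)) := by
          congr 1; funext x; exact hsplit x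
      _ = (∫ x, f x) + ∫ x, f (-x) := integral_add hfint hfint.comp_neg
      _ = (∫ x, f x) + ∫ x, f x := by rw [integral_neg_eq_self]
      _ = 2 * ∫ x in Ioi t, f x := by rw [hwhole]; ring
  -- final computation
  have hRHS : 2 * σ ^ 2 * stdNormalPDF (t / σ) / (t / σ) = 2 * F t := by
    have hsqrt : Real.sqrt (2 * π * σ ^ 2) = Real.sqrt (2 * π) * σ := by
      rw [show 2 * π * σ ^ 2 = (2 * π) * σ ^ 2 by ring, Real.sqrt_mul (by positivity),
        Real.sqrt_sq hσ.le]
    have hσ0 : σ ≠ 0 := ne_of_gt hσ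
    have hexp : Real.exp (-(t / σ) ^ 2 / 2) = Real.exp (-(t - 0) ^ 2 / (2 * σ ^ 2)) := by
      congr 1
      field_simp
      ring
    have hFt : F t = σ ^ 2 * p t * ((t - t) ^ 2 + σ ^ 2) / t := rfl
    rw [stdNormalPDF, hFt, hpdef t, hc, hsqrt, hexp]
    have hs2 : Real.sqrt (2 * π) ≠ 0 := by positivity
    field_simp
    ring
  rw [hmain, hRHS]
  linarith [hsetineq]
end

section
/- Fix k ≥ 2, b > 0, λ > 0. Let x₂, ..., x_k be i.i.d. N(0, σ²) with σ² = b²/(k-1), and let z_i := ST(x_i, λ/2) for i = 2, ..., k. Then with u := λ√(k-1)/(2b), E[Σ_{i=2}^k z_i²] ≤ b²·√(2/π)·(1/u)·exp(-u²/2). -/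
open ProbabilityTheory MeasureTheory
open scoped NNReal ENNReal

private lemma key_int (v t : ℝ) (hv : 0 < v) (ht : 0 < t) :
    ∫ x in Set.Ioi t, (x - t) ^ 2 * Real.exp (-x ^ 2 / (2 * v))
      ≤ v ^ 2 / t * Real.exp (-t ^ 2 / (2 * v)) := by
  set g : ℝ → ℝ := fun x => (x - t) ^ 2 * Real.exp (-x ^ 2 / (2 * v)) with hg
  set F : ℝ → ℝ := fun x => (v * (x - t) ^ 2 * x⁻¹ + v ^ 2 / t) * Real.exp (-x ^ 2 / (2 * v))
    with hF
  set F' : ℝ → ℝ := fun x =>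
    (v * (2 * (x - t)) * x⁻¹ + v * (x - t) ^ 2 * -(x ^ 2)⁻¹) * Real.exp (-x ^ 2 / (2 * v))
      + (v * (x - t) ^ 2 * x⁻¹ + v ^ 2 / t) * (Real.exp (-x ^ 2 / (2 * v)) * (-(2 * x) / (2 * v)))
    with hF'
  -- integrability of g
  have hgint : Integrable g := by
    have hb' : 0 < 1 / (2 * v) := by positivity
    have h2 := integrable_rpow_mul_exp_neg_mul_sq hb' (s := 2) (by norm_num)
    rw [show ((2 : ℝ)) = ((2 : ℕ) : ℝ) by norm_num] at h2
    simp_rw [Real.rpow_natCast] at h2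
    have hbd : Integrable (fun x : ℝ =>
        2 * (x ^ 2 * Real.exp (-(1 / (2 * v)) * x ^ 2))
          + 2 * t ^ 2 * Real.exp (-(1 / (2 * v)) * x ^ 2)) :=
      (h2.const_mul 2).add ((integrable_exp_neg_mul_sq hb').const_mul (2 * t ^ 2))
    refine hbd.mono' ?_ (Filter.Eventually.of_forall fun x => ?_)
    · exact (((continuous_id.sub continuous_const).pow 2).mul
        ((continuous_id.pow 2 |>.neg.div_const _).rexp)).aestronglyMeasurable
    · have he : Real.exp (-x ^ 2 / (2 * v)) = Real.exp (-(1 / (2 * v)) * x ^ 2) := by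
        ring_nf
      have h0 : 0 ≤ Real.exp (-(1 / (2 * v)) * x ^ 2) := (Real.exp_pos _).le
      rw [Real.norm_eq_abs, abs_of_nonneg (by positivity), hg]
      simp only
      rw [he]
      nlinarith [sq_nonneg (x + t), sq_nonneg (x - t), Real.exp_pos (-(1 / (2 * v)) * x ^ 2)]
  -- derivative
  have hderiv : ∀ x : ℝ, 0 < x → HasDerivAt F (F' x) x := by
    intro x hx
    have h1 : HasDerivAt (fun y : ℝ => v * (y - t) ^ 2) (v * (2 * (x - t))) x := by
      have := (((hasDerivAt_id x).sub_const t).pow 2).const_mul v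
      simpa using this
    have h2 := h1.mul (hasDerivAt_inv hx.ne')
    have h3 := h2.add_const (v ^ 2 / t)
    have hu : HasDerivAt (fun y : ℝ => -y ^ 2 / (2 * v)) (-(2 * x) / (2 * v)) x := by
      have := ((hasDerivAt_pow 2 x).neg).div_const (2 * v)
      simpa using this
    have h5 := hu.exp
    have h6 := h3.mul h5
    convert h6 using 1
    all_goals rfl
  -- pointwise bound : g x ≤ - F' x for x ≥ t
  have hpt : ∀ x : ℝ, t ≤ x → g x ≤ -F' x := by
    intro x hx
    have hx0 : 0 < x := lt_of_lt_of_le ht hx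
    have hE : 0 < Real.exp (-x ^ 2 / (2 * v)) := Real.exp_pos _
    have key : (x - t) ^ 2 ≤
        -(v * (2 * (x - t)) * x⁻¹ + v * (x - t) ^ 2 * -(x ^ 2)⁻¹)
          + (v * (x - t) ^ 2 * x⁻¹ + v ^ 2 / t) * ((2 * x) / (2 * v)) := by
      rw [← sub_nonneg]
      have hxt : 0 ≤ x - t := by linarith
      field_simp
      nlinarith [mul_nonneg (mul_nonneg hv.le (sq_nonneg x)) hxt,
        mul_nonneg hv.le (pow_pos ht 3).le]
    have hmul := mul_le_mul_of_nonneg_right key hE.le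
    calc g x ≤ (-(v * (2 * (x - t)) * x⁻¹ + v * (x - t) ^ 2 * -(x ^ 2)⁻¹)
          + (v * (x - t) ^ 2 * x⁻¹ + v ^ 2 / t) * ((2 * x) / (2 * v)))
          * Real.exp (-x ^ 2 / (2 * v)) := hmul
      _ = -F' x := by simp only [hF']; ring
  -- F nonneg
  have hFnn : ∀ x : ℝ, t ≤ x → 0 ≤ F x := by
    intro x hx
    have hx0 : 0 < x := lt_of_lt_of_le ht hx
    have : 0 ≤ v * (x - t) ^ 2 * x⁻¹ + v ^ 2 / t := by positivity
    exact mul_nonneg this (Real.exp_pos _).le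
  have hFt : F t = v ^ 2 / t * Real.exp (-t ^ 2 / (2 * v)) := by
    simp [hF]
  -- interval bound
  have hIoc : ∀ M : ℝ, t ≤ M → (∫ x in t..M, g x) ≤ F t := by
    intro M hM
    have huIcc : Set.uIcc t M = Set.Icc t M := Set.uIcc_of_le hM
    have hne : ∀ x ∈ Set.Icc t M, x ≠ 0 := fun x hx => (lt_of_lt_of_le ht hx.1).ne'
    have hexp : Continuous (fun x : ℝ => Real.exp (-x ^ 2 / (2 * v))) :=
      ((continuous_pow 2).neg.div_const _).rexp
    have hsub : Continuous (fun x : ℝ => x - t) := continuous_id.sub continuous_const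
    have hinv : ContinuousOn (fun x : ℝ => x⁻¹) (Set.Icc t M) :=
      ContinuousOn.inv₀ continuousOn_id hne
    have hinv2 : ContinuousOn (fun x : ℝ => (x ^ 2)⁻¹) (Set.Icc t M) :=
      ContinuousOn.inv₀ (continuous_pow 2).continuousOn
        (fun x hx => pow_ne_zero 2 (hne x hx))
    have hcts : ContinuousOn F' (Set.Icc t M) := by
      apply ContinuousOn.add
      · exact (((continuousOn_const.mul (continuousOn_const.mul hsub.continuousOn)).mul hinv).add
          ((continuousOn_const.mul ((hsub.pow 2).continuousOn)).mul hinv2.neg)).mul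
          hexp.continuousOn
      · exact (((continuousOn_const.mul ((hsub.pow 2).continuousOn)).mul hinv).add
          continuousOn_const).mul
          (hexp.continuousOn.mul ((continuous_const.mul continuous_id).neg.div_const (2*v)).continuousOn)
    have hFTC : ∫ x in t..M, F' x = F M - F t := by
      apply intervalIntegral.integral_eq_sub_of_hasDerivAt
      · intro x hx
        rw [huIcc] at hx
        exact hderiv x (lt_of_lt_of_le ht hx.1)
      · exact (hcts.mono (by rw [huIcc])).intervalIntegrable
    have hmono : (∫ x in t..M, g x) ≤ ∫ x in t..M, -F' x := by
      apply intervalIntegral.integral_mono_on hM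
      · exact hgint.intervalIntegrable
      · exact ((hcts.mono (by rw [huIcc])).intervalIntegrable).neg
      · intro x hx
        exact hpt x hx.1
    calc (∫ x in t..M, g x) ≤ ∫ x in t..M, -F' x := hmono
      _ = -(F M - F t) := by rw [intervalIntegral.integral_neg, hFTC]
      _ = F t - F M := by ring
      _ ≤ F t := by have := hFnn M (le_trans hM le_rfl); linarith [hFnn M hM]
  have htend := intervalIntegral_tendsto_integral_Ioi t hgint.integrableOn Filter.tendsto_id
  rw [← hFt]
  exact le_of_tendsto htend (Filter.eventually_atTop.2 ⟨t, fun M hM => hIoc M hM⟩)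

/-- For `k ≥ 2`, `b > 0`, `λ > 0`, i.i.d. `x₂, …, x_k ~ N(0, b²/(k-1))` and
`z_i := ST(x_i, λ/2)`, with `u := λ√(k-1)/(2b)` we have
`E[Σ z_i²] ≤ b² √(2/π) (1/u) exp(-u²/2)`. -/
theorem lasso_residual_energy_bound {Ω : Type*} [MeasurableSpace Ω]
    (μ : Measure Ω) [IsProbabilityMeasure μ]
    (k : ℕ) (hk : 2 ≤ k) (b lam : ℝ) (hb : 0 < b) (hlam : 0 < lam)
    (X : Fin (k - 1) → Ω → ℝ)
    (hindep : iIndepFun X μ)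
    (hdist : ∀ i, μ.map (X i)
      = gaussianReal 0 ⟨b ^ 2 / ((k : ℝ) - 1),
          div_nonneg (sq_nonneg b)
            (sub_nonneg.mpr (by exact_mod_cast Nat.one_le_of_lt hk))⟩) :
    ∫ ω, ∑ i, softThresh (X i ω) (lam / 2) ^ 2 ∂μ
      ≤ b ^ 2 * Real.sqrt (2 / Real.pi)
          * (1 / (lam * Real.sqrt ((k : ℝ) - 1) / (2 * b)))
          * Real.exp (-(lam * Real.sqrt ((k : ℝ) - 1) / (2 * b)) ^ 2 / 2) := by
  have hk1 : (1 : ℝ) ≤ (k : ℝ) - 1 := by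
    have : (2 : ℝ) ≤ (k : ℝ) := by exact_mod_cast hk
    linarith
  have hkpos : (0 : ℝ) < (k : ℝ) - 1 := by linarith
  set t : ℝ := lam / 2 with htdef
  have ht : 0 < t := by positivity
  set v : ℝ := b ^ 2 / ((k : ℝ) - 1) with hvdef
  have hv : 0 < v := by positivity
  set V : ℝ≥0 := ⟨b ^ 2 / ((k : ℝ) - 1),
          div_nonneg (sq_nonneg b)
            (sub_nonneg.mpr (by exact_mod_cast Nat.one_le_of_lt hk))⟩ with hVdef
  have hVc : (V : ℝ) = v := rfl
  have hVpos : 0 < V := by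
    rw [← NNReal.coe_pos, hVc]; exact hv
  have hV0 : V ≠ 0 := hVpos.ne'
  -- m
  set m : ℝ → ℝ := fun x => max (|x| - t) 0 ^ 2 with hmdef
  have hmc : Continuous m := ((continuous_abs.sub continuous_const).max continuous_const).pow 2
  have hmnn : ∀ x, 0 ≤ m x := fun x => sq_nonneg _
  -- aemeasurability of X i
  have haem : ∀ i, AEMeasurable (X i) μ := by
    intro i
    by_contra h
    have h0 := Measure.map_of_not_aemeasurable h
    rw [hdist i] at h0
    have h1 : (gaussianReal 0 V) Set.univ = 1 := measure_univ
    rw [h0] at h1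
    simp at h1
  -- integral over gaussian
  set J : ℝ := ∫ x, m x ∂(gaussianReal 0 V) with hJdef
  have hmap : ∀ i, ∫ ω, m (X i ω) ∂μ = J := by
    intro i
    rw [hJdef, ← hdist i, integral_map (haem i) hmc.aestronglyMeasurable]
  -- density form
  have hwd : gaussianReal 0 V = volume.withDensity (gaussianPDF 0 V) :=
    gaussianReal_of_var_ne_zero 0 hV0
  have hInt_m : Integrable m (gaussianReal 0 V) := by
    rw [hwd]
    rw [integrable_withDensity_iff (measurable_gaussianPDF 0 V)
      (Filter.Eventually.of_forall fun x => ENNReal.ofReal_lt_top)]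
    have hb' : 0 < 1 / (2 * v) := by positivity
    have h2 := integrable_rpow_mul_exp_neg_mul_sq hb' (s := 2) (by norm_num)
    rw [show ((2 : ℝ)) = ((2 : ℕ) : ℝ) by norm_num] at h2
    simp_rw [Real.rpow_natCast] at h2
    refine ((h2.const_mul ((Real.sqrt (2 * Real.pi * v))⁻¹)).mono'
      ((hmc.mul ?_).aestronglyMeasurable) (Filter.Eventually.of_forall fun x => ?_))
    · have heq : (fun x => (gaussianPDF 0 V x).toReal) = gaussianPDFReal 0 V :=
        funext fun x => ENNReal.toReal_ofReal (gaussianPDFReal_nonneg 0 V x)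
      rw [heq]
      exact continuous_const.mul
        ((((continuous_id.sub continuous_const).pow 2).neg.div_const _).rexp)
    · have hpdf : (gaussianPDF 0 V x).toReal = gaussianPDFReal 0 V x :=
        ENNReal.toReal_ofReal (gaussianPDFReal_nonneg 0 V x)
      rw [Real.norm_eq_abs, abs_of_nonneg (mul_nonneg (hmnn x)
        (by rw [hpdf]; exact gaussianPDFReal_nonneg 0 V x)), hpdf]
      rw [gaussianPDFReal]
      have h1 : m x ≤ x ^ 2 := by
        have h2' : max (|x| - t) 0 ≤ |x| :=
          max_le (by linarith [abs_nonneg x, ht.le]) (abs_nonneg x)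
        calc m x ≤ |x| ^ 2 := pow_le_pow_left₀ (le_max_right _ 0) h2' 2
          _ = x ^ 2 := sq_abs x
      have he : Real.exp (-(x - 0) ^ 2 / (2 * (V : ℝ))) = Real.exp (-(1 / (2 * v)) * x ^ 2) := by
        rw [hVc]; ring_nf
      rw [he]
      calc m x * ((Real.sqrt (2 * Real.pi * ↑V))⁻¹ * Real.exp (-(1 / (2 * v)) * x ^ 2))
          ≤ x ^ 2 * ((Real.sqrt (2 * Real.pi * ↑V))⁻¹ * Real.exp (-(1 / (2 * v)) * x ^ 2)) := by
            apply mul_le_mul_of_nonneg_right h1 (by positivity)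
        _ = (Real.sqrt (2 * Real.pi * v))⁻¹ * (x ^ 2 * Real.exp (-(1 / (2 * v)) * x ^ 2)) := by
            rw [hVc]; ring
  -- J as a concrete Lebesgue integral
  set f0 : ℝ → ℝ := fun y => max (y - t) 0 ^ 2 * Real.exp (-y ^ 2 / (2 * v)) with hf0def
  have hJ : J = (Real.sqrt (2 * Real.pi * v))⁻¹
      * (2 * ∫ x in Set.Ioi t, (x - t) ^ 2 * Real.exp (-x ^ 2 / (2 * v))) := by
    rw [hJdef, hwd]
    rw [show gaussianPDF 0 V = fun x => ((gaussianPDFReal 0 V x).toNNReal : ℝ≥0∞) from rfl]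
    rw [integral_withDensity_eq_integral_smul ((measurable_gaussianPDFReal 0 V).real_toNNReal) m]
    have step1 : ∫ x, (gaussianPDFReal 0 V x).toNNReal • m x
        = ∫ x : ℝ, (Real.sqrt (2 * Real.pi * v))⁻¹ * f0 |x| := by
      apply integral_congr_ae
      apply Filter.Eventually.of_forall
      intro x
      simp only [NNReal.smul_def, smul_eq_mul]
      rw [Real.coe_toNNReal _ (gaussianPDFReal_nonneg 0 V x)]
      rw [gaussianPDFReal, hVc]
      simp only [hf0def, hmdef]
      rw [sq_abs]
      ring_nf
    rw [step1, integral_const_mul, integral_comp_abs (f := f0)]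
    congr 1
    have step2 : ∫ x in Set.Ioi (0:ℝ), f0 x = ∫ x in Set.Ioi t, f0 x := by
      have hind : ∀ x, f0 x = Set.indicator (Set.Ioi t) f0 x := by
        intro x
        by_cases hx : x ∈ Set.Ioi t
        · rw [Set.indicator_of_mem hx]
        · rw [Set.indicator_of_notMem hx]
          simp only [Set.mem_Ioi, not_lt] at hx
          simp only [hf0def]
          rw [max_eq_right (by linarith)]
          ring
      rw [integral_congr_ae (Filter.Eventually.of_forall fun x => hind x)]
      rw [setIntegral_indicator measurableSet_Ioi]
      rw [Set.inter_eq_self_of_subset_right (Set.Ioi_subset_Ioi ht.le)]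
    rw [step2]
    congr 1
    apply setIntegral_congr_fun measurableSet_Ioi
    intro x hx
    simp only [hf0def]
    rw [max_eq_left (by simp only [Set.mem_Ioi] at hx; linarith)]
  -- bound J
  have hJle : J ≤ (Real.sqrt (2 * Real.pi * v))⁻¹ * (2 * (v ^ 2 / t * Real.exp (-t ^ 2 / (2 * v)))) := by
    rw [hJ]
    have := key_int v t hv ht
    have h2 : (0:ℝ) ≤ (Real.sqrt (2 * Real.pi * v))⁻¹ := by positivity
    nlinarith
  -- assemble
  have hst : ∀ (i : Fin (k-1)) (ω : Ω),
      softThresh (X i ω) (lam / 2) ^ 2 = m (X i ω) := by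
    intro i ω
    simp only [softThresh, hmdef, ← htdef]
    rcases lt_trichotomy (X i ω) 0 with h | h | h
    · rw [Real.sign_of_neg h]; ring
    · simp [h, Real.sign_zero, abs_zero, max_eq_right (neg_nonpos.mpr ht.le)]
    · rw [Real.sign_of_pos h]; ring
  have hInt_comp : ∀ i, Integrable (fun ω => m (X i ω)) μ := by
    intro i
    have := (integrable_map_measure hmc.aestronglyMeasurable (haem i)).mp
      (by rw [hdist i]; exact hInt_m)
    exact this
  have hsum : ∫ ω, ∑ i, softThresh (X i ω) (lam / 2) ^ 2 ∂μ
      = ((k : ℝ) - 1) * J := by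
    have : ∀ ω, ∑ i, softThresh (X i ω) (lam / 2) ^ 2
        = ∑ i, m (X i ω) := by
      intro ω; exact Finset.sum_congr rfl fun i _ => hst i ω
    rw [integral_congr_ae (Filter.Eventually.of_forall this)]
    rw [integral_finset_sum _ (fun i _ => hInt_comp i)]
    have : ∑ i : Fin (k-1), ∫ ω, m (X i ω) ∂μ = ∑ _i : Fin (k-1), J :=
      Finset.sum_congr rfl fun i _ => hmap i
    rw [this, Finset.sum_const, Finset.card_univ, Fintype.card_fin, nsmul_eq_mul]
    congr 1
    rw [Nat.cast_sub (by omega), Nat.cast_one]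
  rw [hsum]
  -- final arithmetic
  set s : ℝ := Real.sqrt ((k : ℝ) - 1) with hsdef
  have hs : s ^ 2 = (k : ℝ) - 1 := Real.sq_sqrt hkpos.le
  have hspos : 0 < s := Real.sqrt_pos.mpr hkpos
  have hbs : (b / s) ^ 2 = v := by rw [div_pow, hs]
  have h2πv : Real.sqrt (2 * Real.pi * v) = Real.sqrt (2 * Real.pi) * (b / s) := by
    rw [show 2 * Real.pi * v = (2 * Real.pi) * (b / s) ^ 2 by rw [hbs]]
    rw [Real.sqrt_mul (by positivity), Real.sqrt_sq (by positivity)]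
  have hXY : Real.sqrt (2 / Real.pi) * Real.sqrt (2 * Real.pi) = 2 := by
    rw [← Real.sqrt_mul (by positivity)]
    rw [show (2 / Real.pi) * (2 * Real.pi) = 2 ^ 2 by
      field_simp]
    exact Real.sqrt_sq (by norm_num)
  have hexp_eq : -t ^ 2 / (2 * v) = -(lam * s / (2 * b)) ^ 2 / 2 := by
    rw [hvdef, htdef, ← hs]
    field_simp
  have hXpos : 0 < Real.sqrt (2 * Real.pi) := Real.sqrt_pos.mpr (by positivity)
  have hcoef : ((k : ℝ) - 1) * ((Real.sqrt (2 * Real.pi * v))⁻¹ * (2 * (v ^ 2 / t)))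
      = b ^ 2 * Real.sqrt (2 / Real.pi) * (1 / (lam * s / (2 * b))) := by
    rw [h2πv, hvdef, htdef, ← hs]
    have hYpos : 0 < Real.sqrt (2 / Real.pi) :=
      Real.sqrt_pos.mpr (div_pos two_pos Real.pi_pos)
    have hX : Real.sqrt (2 * Real.pi) = 2 / Real.sqrt (2 / Real.pi) :=
      (eq_div_iff hYpos.ne').mpr (by linarith [hXY])
    rw [hX]
    field_simp
  calc ((k : ℝ) - 1) * J
      ≤ ((k : ℝ) - 1) * ((Real.sqrt (2 * Real.pi * v))⁻¹
          * (2 * (v ^ 2 / t * Real.exp (-t ^ 2 / (2 * v))))) := by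
        apply mul_le_mul_of_nonneg_left hJle (by linarith)
    _ = (((k : ℝ) - 1) * ((Real.sqrt (2 * Real.pi * v))⁻¹ * (2 * (v ^ 2 / t))))
          * Real.exp (-t ^ 2 / (2 * v)) := by ring
    _ = b ^ 2 * Real.sqrt (2 / Real.pi) * (1 / (lam * s / (2 * b)))
          * Real.exp (-(lam * s / (2 * b)) ^ 2 / 2) := by rw [hcoef, hexp_eq]
end

section
/- Fix k ≥ 2, b > 0, and K ∈ {0, 1, ..., k-1}. Let X₁, ..., X_{k-1} be i.i.d. N(0, σ²) with σ² = b²/(k-1), and let X²_{(1)} ≥ ... ≥ X²_{(k-1)} denote the decreasing order statistics of X₁², ..., X_{k-1}². Then E[Σ_{j=1}^K X²_{(j)}] ≤ σ²·K·(2·log(2(k-1)) + 2), equivalently E[Σ_{j=1}^K X²_{(j)}]/b² ≤ (K/(k-1))·(2·log(2(k-1)) + 2). -/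
open ProbabilityTheory MeasureTheory

open ProbabilityTheory MeasureTheory Real Set NNReal in
private lemma exp_int' (a : ℝ) {c : ℝ} (hc : 0 < c) :
    ∫ x in Set.Ioi a, Real.exp (-c*x) = Real.exp (-c*a)/c := by
  have h := integral_comp_mul_left_Ioi (fun y => Real.exp (-y)) a hc
  simp only [smul_eq_mul, integral_exp_neg_Ioi] at h
  simp only [neg_mul]
  rw [h, div_eq_inv_mul]

open ProbabilityTheory MeasureTheory Real Set NNReal in
private lemma gauss_tail' {v : ℝ≥0} (hv : v ≠ 0) {s : ℝ} (hs : 0 < s)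
    (hcond : (v:ℝ) ≤ s * Real.sqrt (2*π*v)) :
    gaussianReal 0 v (Ici s) ≤ ENNReal.ofReal (Real.exp (-s^2 / (2*(v:ℝ)))) := by
  have hvpos : (0:ℝ) < (v:ℝ) := lt_of_le_of_ne v.2 (by exact_mod_cast Ne.symm hv)
  have hsqrtpos : (0:ℝ) < Real.sqrt (2*π*(v:ℝ)) := Real.sqrt_pos.2 (by positivity)
  rw [gaussianReal_apply_eq_integral 0 hv]
  apply ENNReal.ofReal_le_ofReal
  set C : ℝ := (Real.sqrt (2*π*(v:ℝ)))⁻¹ with hC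
  have hCpos : 0 < C := by positivity
  have hrpos : 0 < s/(v:ℝ) := by positivity
  have hpt : ∀ x ∈ Ici s, gaussianPDFReal 0 v x ≤
      C * (Real.exp (s^2/(2*(v:ℝ))) * Real.exp (-(s/(v:ℝ))*x)) := by
    intro x hx
    have hx' : s ≤ x := hx
    rw [← Real.exp_add]
    show (Real.sqrt (2*π*(v:ℝ)))⁻¹ * Real.exp (-(x-0)^2/(2*(v:ℝ))) ≤ _
    rw [hC]
    apply mul_le_mul_of_nonneg_left _ (by positivity)
    apply Real.exp_le_exp.2
    rw [sub_zero]
    have h2 : s^2/(2*(v:ℝ)) + -(s/(v:ℝ))*x = (s^2 - 2*s*x)/(2*(v:ℝ)) := by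
      field_simp; ring
    rw [h2, div_le_div_iff_of_pos_right (by positivity)]
    nlinarith [sq_nonneg (x - s)]
  have hint1 : IntegrableOn (gaussianPDFReal 0 v) (Ici s) :=
    (integrable_gaussianPDFReal 0 v).integrableOn
  have hint2 : IntegrableOn
      (fun x => C * (Real.exp (s^2/(2*(v:ℝ))) * Real.exp (-(s/(v:ℝ))*x))) (Ici s) := by
    have h : IntegrableOn (fun x => Real.exp (-(s/(v:ℝ))*x)) (Ici s) volume :=
      (integrableOn_Ici_iff_integrableOn_Ioi (by simp)).2 (exp_neg_integrableOn_Ioi s hrpos)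
    exact (h.const_mul (Real.exp (s^2/(2*(v:ℝ))))).const_mul C
  have key : C * ((v:ℝ)/s) ≤ 1 := by
    rw [hC, inv_mul_le_iff₀ hsqrtpos, mul_one, div_le_iff₀ hs]
    linarith [hcond]
  calc ∫ x in Ici s, gaussianPDFReal 0 v x
      ≤ ∫ x in Ici s, C * (Real.exp (s^2/(2*(v:ℝ))) * Real.exp (-(s/(v:ℝ))*x)) :=
        setIntegral_mono_on hint1 hint2 measurableSet_Ici hpt
    _ = C * Real.exp (s^2/(2*(v:ℝ))) * ∫ x in Ici s, Real.exp (-(s/(v:ℝ))*x) := by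
        rw [← integral_const_mul]; congr 1; ext x; ring
    _ = C * Real.exp (s^2/(2*(v:ℝ))) * (Real.exp (-(s/(v:ℝ))*s)/(s/(v:ℝ))) := by
        rw [integral_Ici_eq_integral_Ioi, exp_int' s hrpos]
    _ = Real.exp (-s^2/(2*(v:ℝ))) * (C * ((v:ℝ)/s)) := by
        have he : Real.exp (s^2/(2*(v:ℝ))) * Real.exp (-(s/(v:ℝ))*s)
            = Real.exp (-s^2/(2*(v:ℝ))) := by
          rw [← Real.exp_add]; congr 1; field_simp; ring
        rw [show (Real.exp (-(s/(v:ℝ))*s)/(s/(v:ℝ)))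
            = Real.exp (-(s/(v:ℝ))*s) * ((v:ℝ)/s) from by
          rw [div_eq_mul_inv _ (s/(v:ℝ)), inv_div], ← he]
        ring
    _ ≤ Real.exp (-s^2/(2*(v:ℝ))) * 1 :=
        mul_le_mul_of_nonneg_left key (Real.exp_nonneg _)
    _ = Real.exp (-s^2/(2*(v:ℝ))) := mul_one _

open ProbabilityTheory MeasureTheory Real Set NNReal in
private lemma gauss_neg' (v : ℝ≥0) (s : ℝ) :
    gaussianReal 0 v (Iic (-s)) = gaussianReal 0 v (Ici s) := by
  have hmap : (gaussianReal 0 v).map (fun x => (-1:ℝ) * x) = gaussianReal 0 v := by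
    rw [gaussianReal_map_const_mul (-1)]
    norm_num
  conv_lhs => rw [← hmap]
  rw [Measure.map_apply (measurable_const_mul (-1)) measurableSet_Iic]
  congr 1
  ext x
  simp

open ProbabilityTheory MeasureTheory Real Set NNReal in
private lemma gauss_sq_tail' {v : ℝ≥0} (hv : v ≠ 0) {t : ℝ} (ht : 0 < t)
    (hcond : (v:ℝ) ≤ Real.sqrt t * Real.sqrt (2*π*v)) :
    gaussianReal 0 v {x : ℝ | t < x^2} ≤ ENNReal.ofReal (2 * Real.exp (-t / (2*(v:ℝ)))) := by
  set s := Real.sqrt t with hsdef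
  have hs : 0 < s := Real.sqrt_pos.2 ht
  have hs2 : s^2 = t := Real.sq_sqrt ht.le
  have hsub : {x : ℝ | t < x^2} ⊆ Iic (-s) ∪ Ici s := by
    intro x hx
    have h1 : s < |x| := by
      rw [← Real.sqrt_sq_eq_abs]
      exact Real.sqrt_lt_sqrt ht.le hx
    rcases le_or_gt 0 x with h | h
    · right; rw [abs_of_nonneg h] at h1; exact h1.le
    · left; rw [abs_of_neg h] at h1; simp only [mem_Iic]; linarith
  have htail := gauss_tail' hv hs hcond
  rw [hs2] at htail
  calc gaussianReal 0 v {x : ℝ | t < x^2}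
      ≤ gaussianReal 0 v (Iic (-s)) + gaussianReal 0 v (Ici s) :=
        (measure_mono hsub).trans (measure_union_le _ _)
    _ = gaussianReal 0 v (Ici s) + gaussianReal 0 v (Ici s) := by rw [gauss_neg']
    _ ≤ ENNReal.ofReal (Real.exp (-t / (2*(v:ℝ)))) + ENNReal.ofReal (Real.exp (-t / (2*(v:ℝ)))) :=
        add_le_add htail htail
    _ = ENNReal.ofReal (2 * Real.exp (-t / (2*(v:ℝ)))) := by
        rw [← ENNReal.ofReal_add (Real.exp_nonneg _) (Real.exp_nonneg _)]
        ring_nf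

open ProbabilityTheory MeasureTheory Real Set NNReal

/-- Top-`K` energy bound: for `k ≥ 2`, `b > 0`, `K ≤ k-1`, and i.i.d.
`X₁, …, X_{k-1} ~ N(0, σ²)` with `σ² = b²/(k-1)`, the expected sum of the `K` largest
squared coordinates (equivalently, the supremum over all size-`K` index sets of the
corresponding sums) is at most `σ² K (2 log(2(k-1)) + 2)`, i.e. at most
`b² (K/(k-1)) (2 log(2(k-1)) + 2)`. -/
theorem topK_energy_bound {Ω : Type*} [MeasurableSpace Ω]
    (μ : Measure Ω) [IsProbabilityMeasure μ]
    (k K : ℕ) (hk : 2 ≤ k) (hK : K ≤ k - 1) (b σ : ℝ) (hb : 0 < b) (hσ : 0 < σ)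
    (hσ2 : σ ^ 2 = b ^ 2 / ((k : ℝ) - 1))
    (X : Fin (k - 1) → Ω → ℝ)
    (hindep : iIndepFun X μ)
    (hdist : ∀ i, μ.map (X i) = gaussianReal 0 ⟨σ ^ 2, sq_nonneg σ⟩) :
    (∫ ω, (⨆ S : {S : Finset (Fin (k - 1)) // S.card = K},
        ∑ i ∈ (S : Finset (Fin (k - 1))), (X i ω) ^ 2) ∂μ)
      ≤ σ ^ 2 * K * (2 * Real.log (2 * ((k : ℝ) - 1)) + 2) ∧
    (∫ ω, (⨆ S : {S : Finset (Fin (k - 1)) // S.card = K},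
        ∑ i ∈ (S : Finset (Fin (k - 1))), (X i ω) ^ 2) ∂μ) / b ^ 2
      ≤ ((K : ℝ) / ((k : ℝ) - 1)) * (2 * Real.log (2 * ((k : ℝ) - 1)) + 2) := by
  classical
  set c : ℝ := (k : ℝ) - 1 with hcdef
  have hc1 : (1:ℝ) ≤ c := by
    have : (2:ℝ) ≤ (k:ℝ) := by exact_mod_cast hk
    simp only [hcdef]; linarith
  have hc0 : (0:ℝ) < c := by linarith
  have hccast : ((k - 1 : ℕ) : ℝ) = c := by
    simp only [hcdef]; push_cast [Nat.cast_sub (by omega : 1 ≤ k)]; ring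
  have hσ2pos : 0 < σ ^ 2 := by positivity
  set v : ℝ≥0 := ⟨σ ^ 2, sq_nonneg σ⟩ with hvdef
  have hvr : (v : ℝ) = σ ^ 2 := rfl
  have hv : v ≠ 0 := by
    rw [← NNReal.coe_ne_zero, hvr]
    exact hσ2pos.ne'
  haveI hne : Nonempty (Fin (k - 1)) := Fin.pos_iff_nonempty.1 (by omega)
  -- AEMeasurability
  have hXm : ∀ i, AEMeasurable (X i) μ := by
    intro i
    by_contra h
    have h0 := hdist i
    rw [Measure.map_of_not_aemeasurable h] at h0
    have h1 : (1 : ENNReal) = 0 := by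
      rw [← measure_univ (μ := gaussianReal 0 v), ← h0]
      simp
    exact one_ne_zero h1
  have hsqm : ∀ i, AEMeasurable (fun ω => X i ω ^ 2) μ := by
    intro i
    exact (hXm i).pow_const 2
  set M : Ω → ℝ := fun ω => ⨆ i, (X i ω) ^ 2 with hMdef
  set F : Ω → ℝ := fun ω => ⨆ S : {S : Finset (Fin (k - 1)) // S.card = K},
        ∑ i ∈ (S : Finset (Fin (k - 1))), (X i ω) ^ 2 with hFdef
  haveI hSne : Nonempty {S : Finset (Fin (k - 1)) // S.card = K} := by
    obtain ⟨S, -, hS⟩ := Finset.exists_subset_card_eq (s := (Finset.univ : Finset (Fin (k - 1)))) (n := K)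
      (by simpa using hK)
    exact ⟨⟨S, hS⟩⟩
  have hM_nonneg : ∀ ω, 0 ≤ M ω := by
    intro ω
    refine le_trans (sq_nonneg (X (Classical.arbitrary _) ω))
      (le_ciSup (f := fun i => (X i ω) ^ 2) (Set.finite_range _).bddAbove _)
  have hF_nonneg : ∀ ω, 0 ≤ F ω := by
    intro ω
    refine le_trans ?_ (le_ciSup (Set.finite_range _).bddAbove (Classical.arbitrary _))
    exact Finset.sum_nonneg fun i _ => sq_nonneg _
  have hFM : ∀ ω, F ω ≤ K * M ω := by
    intro ω
    apply ciSup_le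
    intro S
    calc ∑ i ∈ (S : Finset (Fin (k - 1))), (X i ω) ^ 2
        ≤ ∑ _i ∈ (S : Finset (Fin (k - 1))), M ω :=
          Finset.sum_le_sum fun i _ =>
            le_ciSup (f := fun j => (X j ω) ^ 2) (Set.finite_range _).bddAbove i
      _ = K * M ω := by rw [Finset.sum_const, S.2, nsmul_eq_mul]
  have hMm : AEMeasurable M μ := AEMeasurable.iSup hsqm
  have hFm : AEMeasurable F μ :=
    AEMeasurable.iSup fun S => Finset.aemeasurable_fun_sum _ fun i _ => hsqm i
  set t₀ : ℝ := 2 * σ ^ 2 * Real.log (2 * c) with ht₀def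
  have hlog2 : Real.log 2 ≤ Real.log (2 * c) :=
    Real.log_le_log (by norm_num) (by linarith)
  have hlogpos : 0 < Real.log (2 * c) :=
    lt_of_lt_of_le (Real.log_pos (by norm_num)) hlog2
  have ht₀pos : 0 < t₀ := by positivity
  -- tail bound for M
  have htail : ∀ t ∈ Ioi t₀, μ {ω | t < M ω}
      ≤ ENNReal.ofReal (2 * c * Real.exp (-t / (2 * σ ^ 2))) := by
    intro t ht
    have htpos : 0 < t := lt_trans ht₀pos ht
    have hsub : {ω | t < M ω} ⊆ ⋃ i, {ω | t < (X i ω) ^ 2} := by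
      intro ω hω
      by_contra hcon
      simp only [mem_iUnion, mem_setOf_eq, not_exists, not_lt] at hcon
      exact absurd (ciSup_le hcon : M ω ≤ t) (not_le.2 hω)
    have hσ2t : σ ^ 2 ≤ t := by
      have hl2 : (0.6931471803 : ℝ) < Real.log 2 := Real.log_two_gt_d9
      have ht₀' : 2 * σ ^ 2 * Real.log 2 ≤ t₀ := by
        rw [ht₀def]
        apply mul_le_mul_of_nonneg_left hlog2 (by positivity)
      nlinarith [le_of_lt (Set.mem_Ioi.mp ht)]
    have hcond : (v : ℝ) ≤ Real.sqrt t * Real.sqrt (2 * π * v) := by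
      have h1 : σ ≤ Real.sqrt t := by
        rw [show σ = Real.sqrt (σ ^ 2) from (Real.sqrt_sq hσ.le).symm]
        exact Real.sqrt_le_sqrt hσ2t
      have h2 : σ ≤ Real.sqrt (2 * π * v) := by
        rw [show σ = Real.sqrt (σ ^ 2) from (Real.sqrt_sq hσ.le).symm]
        apply Real.sqrt_le_sqrt
        rw [hvr]
        nlinarith [Real.pi_gt_three]
      calc (v : ℝ) = σ * σ := by rw [hvr]; ring
        _ ≤ Real.sqrt t * Real.sqrt (2 * π * v) :=
            mul_le_mul h1 h2 hσ.le (Real.sqrt_nonneg _)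
    have hset : MeasurableSet {x : ℝ | t < x ^ 2} := by
      have : {x : ℝ | t < x ^ 2} = (fun x : ℝ => x ^ 2) ⁻¹' Ioi t := rfl
      rw [this]
      exact (measurable_id.pow_const 2) measurableSet_Ioi
    have hone : ∀ i, μ {ω | t < (X i ω) ^ 2}
        ≤ ENNReal.ofReal (2 * Real.exp (-t / (2 * σ ^ 2))) := by
      intro i
      have heq : {ω | t < (X i ω) ^ 2} = X i ⁻¹' {x : ℝ | t < x ^ 2} := rfl
      rw [heq, ← Measure.map_apply_of_aemeasurable (hXm i) hset, hdist i]
      have := gauss_sq_tail' hv htpos hcond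
      rwa [hvr] at this
    calc μ {ω | t < M ω}
        ≤ ∑' i, μ {ω | t < (X i ω) ^ 2} := (measure_mono hsub).trans (measure_iUnion_le _)
      _ = ∑ i, μ {ω | t < (X i ω) ^ 2} := tsum_fintype _
      _ ≤ ∑ _i : Fin (k - 1), ENNReal.ofReal (2 * Real.exp (-t / (2 * σ ^ 2))) :=
          Finset.sum_le_sum fun i _ => hone i
      _ = ENNReal.ofReal (2 * c * Real.exp (-t / (2 * σ ^ 2))) := by
          rw [Finset.sum_const, Finset.card_univ, Fintype.card_fin, nsmul_eq_mul]
          rw [← ENNReal.ofReal_natCast (k - 1),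
            ← ENNReal.ofReal_mul (by positivity), hccast]
          congr 1
          ring
  set r : ℝ := (2 * σ ^ 2)⁻¹ with hrdef
  have hrpos : 0 < r := by rw [hrdef]; positivity
  have harg : ∀ t : ℝ, -t / (2 * σ ^ 2) = -r * t := by
    intro t; rw [hrdef]; ring
  have hexp_int : ∫ t in Ioi t₀, 2 * c * Real.exp (-r * t) = 2 * σ ^ 2 := by
    rw [integral_const_mul, exp_int' t₀ hrpos]
    have h1 : r * t₀ = Real.log (2 * c) := by
      rw [hrdef, ht₀def]; field_simp
    have h2 : Real.exp (-r * t₀) = (2 * c)⁻¹ := by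
      rw [neg_mul, Real.exp_neg, h1, Real.exp_log (by linarith)]
    rw [h2, hrdef]
    field_simp
  have hint : IntegrableOn (fun t => 2 * c * Real.exp (-r * t)) (Ioi t₀) :=
    (exp_neg_integrableOn_Ioi t₀ hrpos).const_mul (2 * c)
  have hsplit : ∫⁻ t in Ioi 0, μ {ω | t < M ω}
      ≤ ENNReal.ofReal t₀ + ENNReal.ofReal (2 * σ ^ 2) := by
    rw [← Ioc_union_Ioi_eq_Ioi ht₀pos.le,
      lintegral_union measurableSet_Ioi Ioc_disjoint_Ioi_same]
    apply add_le_add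
    · calc ∫⁻ t in Ioc 0 t₀, μ {ω | t < M ω}
          ≤ ∫⁻ _t in Ioc 0 t₀, 1 := lintegral_mono fun t => prob_le_one
        _ = volume (Ioc 0 t₀) := setLIntegral_one _
        _ = ENNReal.ofReal t₀ := by rw [Real.volume_Ioc, sub_zero]
    · calc ∫⁻ t in Ioi t₀, μ {ω | t < M ω}
          ≤ ∫⁻ t in Ioi t₀, ENNReal.ofReal (2 * c * Real.exp (-r * t)) := by
            apply setLIntegral_mono
            · exact ENNReal.measurable_ofReal.comp
                ((measurable_const.mul ((measurable_id.const_mul (-r)).exp)))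
            · intro t ht
              have := htail t ht
              rwa [harg t] at this
        _ = ENNReal.ofReal (∫ t in Ioi t₀, 2 * c * Real.exp (-r * t)) :=
            (ofReal_integral_eq_lintegral_ofReal hint
              (ae_of_all _ fun t => by positivity)).symm
        _ = ENNReal.ofReal (2 * σ ^ 2) := by rw [hexp_int]
  have hMlayer : ∫⁻ ω, ENNReal.ofReal (M ω) ∂μ
      ≤ ENNReal.ofReal t₀ + ENNReal.ofReal (2 * σ ^ 2) := by
    rw [lintegral_eq_lintegral_meas_lt μ (ae_of_all _ hM_nonneg) hMm]
    exact hsplit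
  have hFlin : ∫⁻ ω, ENNReal.ofReal (F ω) ∂μ ≤ ENNReal.ofReal ((K : ℝ) * (t₀ + 2 * σ ^ 2)) := by
    calc ∫⁻ ω, ENNReal.ofReal (F ω) ∂μ
        ≤ ∫⁻ ω, ENNReal.ofReal ((K : ℝ) * M ω) ∂μ :=
          lintegral_mono fun ω => ENNReal.ofReal_le_ofReal (hFM ω)
      _ = ∫⁻ ω, ENNReal.ofReal (K : ℝ) * ENNReal.ofReal (M ω) ∂μ := by
          congr 1; ext ω; rw [ENNReal.ofReal_mul (Nat.cast_nonneg K)]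
      _ = ENNReal.ofReal (K : ℝ) * ∫⁻ ω, ENNReal.ofReal (M ω) ∂μ :=
          lintegral_const_mul' _ _ ENNReal.ofReal_ne_top
      _ ≤ ENNReal.ofReal (K : ℝ) * (ENNReal.ofReal t₀ + ENNReal.ofReal (2 * σ ^ 2)) :=
          mul_le_mul_right hMlayer _
      _ = ENNReal.ofReal ((K : ℝ) * (t₀ + 2 * σ ^ 2)) := by
          rw [← ENNReal.ofReal_add ht₀pos.le (by positivity),
            ← ENNReal.ofReal_mul (Nat.cast_nonneg K)]
  have hmain : ∫ ω, F ω ∂μ ≤ σ ^ 2 * K * (2 * Real.log (2 * c) + 2) := by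
    rw [integral_eq_lintegral_of_nonneg_ae (ae_of_all _ hF_nonneg) hFm.aestronglyMeasurable]
    have h1 := ENNReal.toReal_mono ENNReal.ofReal_ne_top hFlin
    rw [ENNReal.toReal_ofReal (by positivity)] at h1
    refine h1.trans (le_of_eq ?_)
    rw [ht₀def]; ring
  refine ⟨hmain, ?_⟩
  have hb2 : (0:ℝ) < b ^ 2 := by positivity
  have h2 : (∫ ω, F ω ∂μ) / b ^ 2 ≤ (σ ^ 2 * K * (2 * Real.log (2 * c) + 2)) / b ^ 2 := by
    gcongr
  refine h2.trans (le_of_eq ?_)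
  rw [hσ2]
  field_simp
end
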